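/- Let n₁, n₂ ≥ 1, l ∈ ℕ, 0 < q_i < p_i ≤ 1 and 0 ≤ α_i ≤ β_i for i = 1,2. Let M > 0 and 0 < γ₁, γ₂ ≤ 1, and let f : [0,∞) × [0,∞) → ℝ satisfy the Lipschitz-type condition |f(t₁,t₂) − f(x₁,x₂)| ≤ M·|t₁ − x₁|^{γ₁}·|t₂ − x₂|^{γ₂} for all (t₁,t₂), (x₁,x₂) ∈ [0,∞) × [0,∞). Then for every (x₁,x₂) ∈ [0,1] × [0,1]: |S(f; x₁, x₂) − f(x₁, x₂)| ≤ M · (S((t₁ − x₁)²; x₁, x₂))^{γ₁/2} · (S((t₂ − x₂)²; x₁, x₂))^{γ₂/2}, where S((t_i − x_i)²; x₁, x₂) denotes S applied to the function (t₁,t₂) ↦ (t_i − x_i)². -/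
import Mathlib


open Finset

/-- The (p,q)-integer `[k]_{p,q} = (p^k - q^k)/(p - q)`. -/
noncomputable def pqInt (p q : ℝ) (k : ℕ) : ℝ := (p ^ k - q ^ k) / (p - q)

/-- The (p,q)-factorial `[n]_{p,q}! = ∏_{k=1}^n [k]_{p,q}`. -/
noncomputable def pqFact (p q : ℝ) (n : ℕ) : ℝ := ∏ k ∈ Finset.Icc 1 n, pqInt p q k

/-- The (p,q)-binomial coefficient `C(n,k)_{p,q}`. -/
noncomputable def pqBinom (p q : ℝ) (n k : ℕ) : ℝ :=
  pqFact p q n / (pqFact p q k * pqFact p q (n - k))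

/-- The (p,q)-Schurer basis function `s_{n,l,ν}^{p,q}(x)`. -/
noncomputable def schurerBasis (p q : ℝ) (n l ν : ℕ) (x : ℝ) : ℝ :=
  (1 / p ^ ((n + l) * (n + l - 1) / 2)) * pqBinom p q (n + l) ν *
    p ^ (ν * (ν - 1) / 2) * x ^ ν * ∏ j ∈ Finset.range (n + l - ν), (p ^ j - q ^ j * x)

/-- The Stancu node `T(ν) = (p^{n-ν}·[ν]_{p,q} + α)/([n]_{p,q} + β)`. -/
noncomputable def stancuNode (p q α β : ℝ) (n ν : ℕ) : ℝ :=
  (p ^ ((n : ℤ) - (ν : ℤ)) * pqInt p q ν + α) / (pqInt p q n + β)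

/-- The bivariate (p,q)-Schurer–Stancu operator. -/
noncomputable def schurerStancu (n₁ n₂ l : ℕ) (p₁ q₁ α₁ β₁ p₂ q₂ α₂ β₂ : ℝ)
    (f : ℝ → ℝ → ℝ) (x₁ x₂ : ℝ) : ℝ :=
  ∑ ν₁ ∈ Finset.range (n₁ + l + 1), ∑ ν₂ ∈ Finset.range (n₂ + l + 1),
    schurerBasis p₁ q₁ n₁ l ν₁ x₁ * schurerBasis p₂ q₂ n₂ l ν₂ x₂ *
      f (stancuNode p₁ q₁ α₁ β₁ n₁ ν₁) (stancuNode p₂ q₂ α₂ β₂ n₂ ν₂)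

variable {p q : ℝ}

lemma pqInt_pos (hq : 0 < q) (hqp : q < p) {k : ℕ} (hk : 0 < k) : 0 < pqInt p q k := by
  have h : q ^ k < p ^ k := pow_lt_pow_left₀ hqp hq.le hk.ne'
  exact div_pos (by linarith) (by linarith)

lemma pqInt_nonneg (hq : 0 < q) (hqp : q < p) (k : ℕ) : 0 ≤ pqInt p q k := by
  cases k with
  | zero => simp [pqInt]
  | succ n => exact (pqInt_pos hq hqp n.succ_pos).le

lemma pqFact_pos (hq : 0 < q) (hqp : q < p) (n : ℕ) : 0 < pqFact p q n :=
  Finset.prod_pos fun k hk => pqInt_pos hq hqp (Finset.mem_Icc.mp hk).1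

lemma pqBinom_pos (hq : 0 < q) (hqp : q < p) (n k : ℕ) : 0 < pqBinom p q n k :=
  div_pos (pqFact_pos hq hqp n) (mul_pos (pqFact_pos hq hqp k) (pqFact_pos hq hqp (n - k)))

lemma pqFact_succ (p q : ℝ) (n : ℕ) : pqFact p q (n + 1) = pqFact p q n * pqInt p q (n + 1) :=
  Finset.prod_Icc_succ_top (Nat.le_add_left 1 n) _

lemma pqFact_zero (p q : ℝ) : pqFact p q 0 = 1 := by simp [pqFact]

lemma pqBinom_zero (hq : 0 < q) (hqp : q < p) (n : ℕ) : pqBinom p q n 0 = 1 := by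
  simp [pqBinom, pqFact_zero, div_self (pqFact_pos hq hqp n).ne']

lemma pqBinom_self (hq : 0 < q) (hqp : q < p) (n : ℕ) : pqBinom p q n n = 1 := by
  simp [pqBinom, pqFact_zero, div_self (pqFact_pos hq hqp n).ne']

lemma pqInt_split (hpq : p ≠ q) {k m : ℕ} (hk : k ≤ m) :
    pqInt p q m = p ^ k * pqInt p q (m - k) + q ^ (m - k) * pqInt p q k := by
  have h1 : p ^ k * p ^ (m - k) = p ^ m := by rw [← pow_add, Nat.add_sub_cancel' hk]
  have h2 : q ^ (m - k) * q ^ k = q ^ m := by rw [← pow_add, Nat.sub_add_cancel hk]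
  have hpq' : p - q ≠ 0 := sub_ne_zero.mpr hpq
  unfold pqInt
  field_simp
  linear_combination h2 - h1

lemma pqBinom_pascal (hq : 0 < q) (hqp : q < p) {m k : ℕ} (hk1 : 1 ≤ k) (hk : k ≤ m) :
    pqBinom p q (m + 1) k
      = p ^ k * pqBinom p q m k + q ^ (m + 1 - k) * pqBinom p q m (k - 1) := by
  obtain ⟨k', rfl⟩ : ∃ k', k = k' + 1 := ⟨k - 1, by omega⟩
  have hsub1 : m + 1 - (k' + 1) = m - k' := by omega
  have hsub3 : m - (k' + 1 - 1) = m - k' := by omega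
  have hI : pqInt p q (m + 1)
      = p ^ (k' + 1) * pqInt p q (m - k') + q ^ (m - k') * pqInt p q (k' + 1) := by
    have h := pqInt_split (p := p) (q := q) hqp.ne' (show k' + 1 ≤ m + 1 by omega)
    rwa [hsub1] at h
  have hFm1 : pqFact p q (m + 1) = pqFact p q m * pqInt p q (m + 1) := pqFact_succ p q m
  have hFk : pqFact p q (k' + 1) = pqFact p q k' * pqInt p q (k' + 1) := pqFact_succ p q k'
  have hFmk : pqFact p q (m - k')
      = pqFact p q (m - (k' + 1)) * pqInt p q (m - k') := by
    rw [show m - k' = (m - (k' + 1)) + 1 by omega, pqFact_succ,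
      show m - (k' + 1) + 1 = m - k' by omega]
  unfold pqBinom
  rw [hsub1, hsub3, Nat.add_sub_cancel, hFm1, hFk, hFmk, hI]
  have h1 := (pqFact_pos hq hqp k').ne'
  have h2 := (pqFact_pos hq hqp (m - (k' + 1))).ne'
  have h3 := (pqInt_pos hq hqp (Nat.succ_pos k')).ne'
  have h4 : pqInt p q (m - k') ≠ 0 := (pqInt_pos hq hqp (by omega)).ne'
  field_simp

lemma tri (ν : ℕ) : (ν + 1) * ν / 2 = ν * (ν - 1) / 2 + ν := by
  cases ν with
  | zero => rfl
  | succ k =>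
    simp only [Nat.add_sub_cancel]
    have h : (k + 1 + 1) * (k + 1) = (k + 1) * k + 2 * (k + 1) := by ring
    rw [h, Nat.add_mul_div_left _ _ (by norm_num : 0 < 2)]

lemma sum_pascal_rearrange (a b c : ℕ → ℝ) (m : ℕ)
    (h1 : ∀ ν < m, a (ν + 1) = b (ν + 1) + c ν) (h2 : a 0 = b 0) (h3 : a (m + 1) = c m) :
    ∑ ν ∈ Finset.range (m + 1 + 1), a ν
      = ∑ ν ∈ Finset.range (m + 1), b ν + ∑ ν ∈ Finset.range (m + 1), c ν := by
  rw [Finset.sum_range_succ' a (m + 1), Finset.sum_range_succ (fun i => a (i + 1)) m,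
    Finset.sum_range_succ' b m, Finset.sum_range_succ c m]
  rw [Finset.sum_congr rfl (fun ν hν => h1 ν (Finset.mem_range.mp hν)), Finset.sum_add_distrib,
    h2, h3]
  ring

lemma schurer_sum_aux (hq : 0 < q) (hqp : q < p) (x : ℝ) (m : ℕ) :
    ∑ ν ∈ Finset.range (m + 1), pqBinom p q m ν * p ^ (ν * (ν - 1) / 2) * x ^ ν *
      ∏ j ∈ Finset.range (m - ν), (p ^ j - q ^ j * x) = p ^ (m * (m - 1) / 2) := by
  induction m with
  | zero => simp [pqBinom, pqFact]
  | succ m ih =>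
    have h1 : ∀ ν < m,
        pqBinom p q (m + 1) (ν + 1) * p ^ ((ν + 1) * (ν + 1 - 1) / 2) * x ^ (ν + 1) *
          ∏ j ∈ Finset.range (m + 1 - (ν + 1)), (p ^ j - q ^ j * x)
        = (p ^ (ν + 1) * pqBinom p q m (ν + 1) * p ^ ((ν + 1) * (ν + 1 - 1) / 2) * x ^ (ν + 1) *
            ∏ j ∈ Finset.range (m + 1 - (ν + 1)), (p ^ j - q ^ j * x))
          + q ^ (m - ν) * pqBinom p q m ν * p ^ ((ν + 1) * (ν + 1 - 1) / 2) * x ^ (ν + 1) *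
            ∏ j ∈ Finset.range (m - ν), (p ^ j - q ^ j * x) := by
      intro ν hν
      rw [pqBinom_pascal hq hqp (show 1 ≤ ν + 1 by omega) (show ν + 1 ≤ m by omega),
        show ν + 1 - 1 = ν from rfl, show m + 1 - (ν + 1) = m - ν by omega]
      generalize pqBinom p q m (ν + 1) = B1
      ring
    have h2 : pqBinom p q (m + 1) 0 * p ^ (0 * (0 - 1) / 2) * x ^ 0 *
          ∏ j ∈ Finset.range (m + 1 - 0), (p ^ j - q ^ j * x)
        = p ^ 0 * pqBinom p q m 0 * p ^ (0 * (0 - 1) / 2) * x ^ 0 *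
          ∏ j ∈ Finset.range (m + 1 - 0), (p ^ j - q ^ j * x) := by
      rw [pqBinom_zero hq hqp, pqBinom_zero hq hqp]
      ring
    have h3 : pqBinom p q (m + 1) (m + 1) * p ^ ((m + 1) * (m + 1 - 1) / 2) * x ^ (m + 1) *
          ∏ j ∈ Finset.range (m + 1 - (m + 1)), (p ^ j - q ^ j * x)
        = q ^ (m - m) * pqBinom p q m m * p ^ ((m + 1) * (m + 1 - 1) / 2) * x ^ (m + 1) *
          ∏ j ∈ Finset.range (m - m), (p ^ j - q ^ j * x) := by
      rw [pqBinom_self hq hqp, pqBinom_self hq hqp, Nat.sub_self, Nat.sub_self]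
      simp
    have key := sum_pascal_rearrange
      (fun ν => pqBinom p q (m + 1) ν * p ^ (ν * (ν - 1) / 2) * x ^ ν *
        ∏ j ∈ Finset.range (m + 1 - ν), (p ^ j - q ^ j * x))
      (fun ν => p ^ ν * pqBinom p q m ν * p ^ (ν * (ν - 1) / 2) * x ^ ν *
        ∏ j ∈ Finset.range (m + 1 - ν), (p ^ j - q ^ j * x))
      (fun ν => q ^ (m - ν) * pqBinom p q m ν * p ^ ((ν + 1) * (ν + 1 - 1) / 2) * x ^ (ν + 1) *
        ∏ j ∈ Finset.range (m - ν), (p ^ j - q ^ j * x))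
      m h1 h2 h3
    rw [key, ← Finset.sum_add_distrib]
    have hbc : ∀ ν ∈ Finset.range (m + 1),
        (p ^ ν * pqBinom p q m ν * p ^ (ν * (ν - 1) / 2) * x ^ ν *
          ∏ j ∈ Finset.range (m + 1 - ν), (p ^ j - q ^ j * x))
        + q ^ (m - ν) * pqBinom p q m ν * p ^ ((ν + 1) * (ν + 1 - 1) / 2) * x ^ (ν + 1) *
          ∏ j ∈ Finset.range (m - ν), (p ^ j - q ^ j * x)
        = p ^ m * (pqBinom p q m ν * p ^ (ν * (ν - 1) / 2) * x ^ ν *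
            ∏ j ∈ Finset.range (m - ν), (p ^ j - q ^ j * x)) := by
      intro ν hν
      have hνm := Finset.mem_range.mp hν
      have hpm : p ^ ν * p ^ (m - ν) = p ^ m := by rw [← pow_add]; congr 1; omega
      rw [show m + 1 - ν = (m - ν) + 1 by omega, Finset.prod_range_succ,
        show ν + 1 - 1 = ν from rfl, tri ν, pow_add, pow_succ, ← hpm]
      ring
    rw [Finset.sum_congr rfl hbc, ← Finset.mul_sum, ih, ← pow_add]
    congr 1
    rw [show m + 1 - 1 = m from rfl]
    rw [tri m]
    exact Nat.add_comm _ _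

lemma schurerBasis_sum (hq : 0 < q) (hqp : q < p) (n l : ℕ) (x : ℝ) :
    ∑ ν ∈ Finset.range (n + l + 1), schurerBasis p q n l ν x = 1 := by
  have hp : 0 < p := hq.trans hqp
  unfold schurerBasis
  have hc : ∀ ν ∈ Finset.range (n + l + 1),
      (1 / p ^ ((n + l) * (n + l - 1) / 2)) * pqBinom p q (n + l) ν * p ^ (ν * (ν - 1) / 2)
        * x ^ ν * ∏ j ∈ Finset.range (n + l - ν), (p ^ j - q ^ j * x)
      = (1 / p ^ ((n + l) * (n + l - 1) / 2)) *
        (pqBinom p q (n + l) ν * p ^ (ν * (ν - 1) / 2) * x ^ ν *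
          ∏ j ∈ Finset.range (n + l - ν), (p ^ j - q ^ j * x)) := fun ν _ => by ring
  rw [Finset.sum_congr rfl hc, ← Finset.mul_sum, schurer_sum_aux hq hqp, one_div,
    inv_mul_cancel₀ (pow_ne_zero _ hp.ne')]

lemma schurerBasis_nonneg (hq : 0 < q) (hqp : q < p) (n l ν : ℕ) {x : ℝ}
    (hx0 : 0 ≤ x) (hx1 : x ≤ 1) : 0 ≤ schurerBasis p q n l ν x := by
  have hp : 0 < p := hq.trans hqp
  have hprod : 0 ≤ ∏ j ∈ Finset.range (n + l - ν), (p ^ j - q ^ j * x) := by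
    refine Finset.prod_nonneg fun j _ => ?_
    have h1 : q ^ j * x ≤ q ^ j * 1 := mul_le_mul_of_nonneg_left hx1 (pow_pos hq j).le
    have h2 : q ^ j ≤ p ^ j := pow_le_pow_left₀ hq.le hqp.le j
    linarith
  have hb := (pqBinom_pos hq hqp (n + l) ν).le
  have h1 : (0:ℝ) ≤ 1 / p ^ ((n + l) * (n + l - 1) / 2) := by positivity
  have h2 : (0:ℝ) ≤ p ^ (ν * (ν - 1) / 2) := by positivity
  have h3 : (0:ℝ) ≤ x ^ ν := pow_nonneg hx0 ν
  exact mul_nonneg (mul_nonneg (mul_nonneg (mul_nonneg h1 hb) h2) h3) hprod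

lemma stancuNode_nonneg {α β : ℝ} (hq : 0 < q) (hqp : q < p) (hα : 0 ≤ α) (hβ : 0 ≤ β)
    {n : ℕ} (hn : 1 ≤ n) (ν : ℕ) : 0 ≤ stancuNode p q α β n ν := by
  have hp : 0 < p := hq.trans hqp
  unfold stancuNode
  refine div_nonneg (add_nonneg (mul_nonneg ?_ (pqInt_nonneg hq hqp ν)) hα)
    (add_nonneg (pqInt_nonneg hq hqp n) hβ)
  positivity

/-- **Approximation in the Lipschitz class.** If `f` satisfies
`|f(t₁,t₂) − f(x₁,x₂)| ≤ M·|t₁ − x₁|^{γ₁}·|t₂ − x₂|^{γ₂}` on `[0,∞)²` with `M > 0` and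
`0 < γ₁, γ₂ ≤ 1`, then for `(x₁,x₂) ∈ [0,1]²`:
`|S(f; x₁, x₂) − f(x₁, x₂)| ≤ M·(S((t₁−x₁)²; x₁,x₂))^{γ₁/2}·(S((t₂−x₂)²; x₁,x₂))^{γ₂/2}`. -/
theorem schurerStancu_lipschitz_estimate (n₁ n₂ l : ℕ) (hn₁ : 1 ≤ n₁) (hn₂ : 1 ≤ n₂)
    (p₁ q₁ α₁ β₁ p₂ q₂ α₂ β₂ : ℝ)
    (hq₁ : 0 < q₁) (hq₁p : q₁ < p₁) (hp₁ : p₁ ≤ 1) (hα₁ : 0 ≤ α₁) (hαβ₁ : α₁ ≤ β₁)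
    (hq₂ : 0 < q₂) (hq₂p : q₂ < p₂) (hp₂ : p₂ ≤ 1) (hα₂ : 0 ≤ α₂) (hαβ₂ : α₂ ≤ β₂)
    (M γ₁ γ₂ : ℝ) (hM : 0 < M) (hγ₁ : 0 < γ₁) (hγ₁' : γ₁ ≤ 1) (hγ₂ : 0 < γ₂) (hγ₂' : γ₂ ≤ 1)
    (f : ℝ → ℝ → ℝ)
    (hf : ∀ t₁ t₂ x₁ x₂ : ℝ, 0 ≤ t₁ → 0 ≤ t₂ → 0 ≤ x₁ → 0 ≤ x₂ →
      |f t₁ t₂ - f x₁ x₂| ≤ M * |t₁ - x₁| ^ γ₁ * |t₂ - x₂| ^ γ₂)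
    (x₁ x₂ : ℝ) (hx₁ : x₁ ∈ Set.Icc (0 : ℝ) 1) (hx₂ : x₂ ∈ Set.Icc (0 : ℝ) 1) :
    |schurerStancu n₁ n₂ l p₁ q₁ α₁ β₁ p₂ q₂ α₂ β₂ f x₁ x₂ - f x₁ x₂| ≤
      M * (schurerStancu n₁ n₂ l p₁ q₁ α₁ β₁ p₂ q₂ α₂ β₂
            (fun t₁ _ => (t₁ - x₁) ^ 2) x₁ x₂) ^ (γ₁ / 2)
        * (schurerStancu n₁ n₂ l p₁ q₁ α₁ β₁ p₂ q₂ α₂ β₂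
            (fun _ t₂ => (t₂ - x₂) ^ 2) x₁ x₂) ^ (γ₂ / 2) := by
  obtain ⟨hx₁0, hx₁1⟩ := hx₁
  obtain ⟨hx₂0, hx₂1⟩ := hx₂
  set R₁ := Finset.range (n₁ + l + 1) with hR₁
  set R₂ := Finset.range (n₂ + l + 1) with hR₂
  set s₁ : ℕ → ℝ := fun ν => schurerBasis p₁ q₁ n₁ l ν x₁ with hs₁def
  set s₂ : ℕ → ℝ := fun ν => schurerBasis p₂ q₂ n₂ l ν x₂ with hs₂def
  set T₁ : ℕ → ℝ := fun ν => stancuNode p₁ q₁ α₁ β₁ n₁ ν with hT₁def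
  set T₂ : ℕ → ℝ := fun ν => stancuNode p₂ q₂ α₂ β₂ n₂ ν with hT₂def
  have hS : ∀ F : ℝ → ℝ → ℝ, schurerStancu n₁ n₂ l p₁ q₁ α₁ β₁ p₂ q₂ α₂ β₂ F x₁ x₂
      = ∑ ν₁ ∈ R₁, ∑ ν₂ ∈ R₂, s₁ ν₁ * s₂ ν₂ * F (T₁ ν₁) (T₂ ν₂) := fun F => rfl
  have hs₁ : ∀ ν, 0 ≤ s₁ ν := fun ν => schurerBasis_nonneg hq₁ hq₁p _ _ _ hx₁0 hx₁1
  have hs₂ : ∀ ν, 0 ≤ s₂ ν := fun ν => schurerBasis_nonneg hq₂ hq₂p _ _ _ hx₂0 hx₂1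
  have hsum₁ : ∑ ν ∈ R₁, s₁ ν = 1 := schurerBasis_sum hq₁ hq₁p n₁ l x₁
  have hsum₂ : ∑ ν ∈ R₂, s₂ ν = 1 := schurerBasis_sum hq₂ hq₂p n₂ l x₂
  have hT₁0 : ∀ ν, 0 ≤ T₁ ν := fun ν => stancuNode_nonneg hq₁ hq₁p hα₁ (hα₁.trans hαβ₁) hn₁ ν
  have hT₂0 : ∀ ν, 0 ≤ T₂ ν := fun ν => stancuNode_nonneg hq₂ hq₂p hα₂ (hα₂.trans hαβ₂) hn₂ ν
  have prod_sum : ∀ g₁ g₂ : ℕ → ℝ,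
      ∑ ν₁ ∈ R₁, ∑ ν₂ ∈ R₂, s₁ ν₁ * s₂ ν₂ * (g₁ ν₁ * g₂ ν₂)
      = (∑ ν₁ ∈ R₁, s₁ ν₁ * g₁ ν₁) * (∑ ν₂ ∈ R₂, s₂ ν₂ * g₂ ν₂) := by
    intro g₁ g₂
    rw [Finset.sum_mul_sum]
    exact Finset.sum_congr rfl fun ν₁ _ => Finset.sum_congr rfl fun ν₂ _ => by ring
  have hone : ∑ ν₁ ∈ R₁, ∑ ν₂ ∈ R₂, s₁ ν₁ * s₂ ν₂ = 1 := by
    have h := prod_sum (fun _ => 1) (fun _ => 1)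
    simp only [mul_one] at h
    rw [h, hsum₁, hsum₂, one_mul]
  have hA : schurerStancu n₁ n₂ l p₁ q₁ α₁ β₁ p₂ q₂ α₂ β₂ (fun t₁ _ => (t₁ - x₁) ^ 2) x₁ x₂
      = ∑ ν₁ ∈ R₁, s₁ ν₁ * (T₁ ν₁ - x₁) ^ 2 := by
    rw [hS]
    have h := prod_sum (fun ν₁ => (T₁ ν₁ - x₁) ^ 2) (fun _ => 1)
    simp only [mul_one] at h
    rw [h, hsum₂, mul_one]
  have hB : schurerStancu n₁ n₂ l p₁ q₁ α₁ β₁ p₂ q₂ α₂ β₂ (fun _ t₂ => (t₂ - x₂) ^ 2) x₁ x₂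
      = ∑ ν₂ ∈ R₂, s₂ ν₂ * (T₂ ν₂ - x₂) ^ 2 := by
    rw [hS]
    have h := prod_sum (fun _ => 1) (fun ν₂ => (T₂ ν₂ - x₂) ^ 2)
    simp only [one_mul, mul_one] at h
    rw [h, hsum₁, one_mul]
  have key : schurerStancu n₁ n₂ l p₁ q₁ α₁ β₁ p₂ q₂ α₂ β₂ f x₁ x₂ - f x₁ x₂
      = ∑ ν₁ ∈ R₁, ∑ ν₂ ∈ R₂, s₁ ν₁ * s₂ ν₂ * (f (T₁ ν₁) (T₂ ν₂) - f x₁ x₂) := by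
    rw [hS f]
    simp only [mul_sub, Finset.sum_sub_distrib]
    congr 1
    have h : ∑ ν₁ ∈ R₁, ∑ ν₂ ∈ R₂, s₁ ν₁ * s₂ ν₂ * f x₁ x₂
        = (∑ ν₁ ∈ R₁, ∑ ν₂ ∈ R₂, s₁ ν₁ * s₂ ν₂) * f x₁ x₂ := by
      rw [Finset.sum_mul]
      exact Finset.sum_congr rfl fun ν₁ _ => (Finset.sum_mul _ _ _).symm
    rw [h, hone, one_mul]
  have habs : |schurerStancu n₁ n₂ l p₁ q₁ α₁ β₁ p₂ q₂ α₂ β₂ f x₁ x₂ - f x₁ x₂|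
      ≤ M * ((∑ ν₁ ∈ R₁, s₁ ν₁ * |T₁ ν₁ - x₁| ^ γ₁)
          * (∑ ν₂ ∈ R₂, s₂ ν₂ * |T₂ ν₂ - x₂| ^ γ₂)) := by
    rw [key]
    refine le_trans (Finset.abs_sum_le_sum_abs _ _) ?_
    have hb : ∀ ν₁ ∈ R₁, |∑ ν₂ ∈ R₂, s₁ ν₁ * s₂ ν₂ * (f (T₁ ν₁) (T₂ ν₂) - f x₁ x₂)|
        ≤ ∑ ν₂ ∈ R₂, s₁ ν₁ * s₂ ν₂ * (M * |T₁ ν₁ - x₁| ^ γ₁ * |T₂ ν₂ - x₂| ^ γ₂) := by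
      intro ν₁ _
      refine le_trans (Finset.abs_sum_le_sum_abs _ _) (Finset.sum_le_sum fun ν₂ _ => ?_)
      rw [abs_mul, abs_of_nonneg (mul_nonneg (hs₁ ν₁) (hs₂ ν₂))]
      exact mul_le_mul_of_nonneg_left (hf _ _ _ _ (hT₁0 ν₁) (hT₂0 ν₂) hx₁0 hx₂0)
        (mul_nonneg (hs₁ ν₁) (hs₂ ν₂))
    refine le_trans (Finset.sum_le_sum hb) (le_of_eq ?_)
    have h := prod_sum (fun ν₁ => M * |T₁ ν₁ - x₁| ^ γ₁) (fun ν₂ => |T₂ ν₂ - x₂| ^ γ₂)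
    calc ∑ ν₁ ∈ R₁, ∑ ν₂ ∈ R₂, s₁ ν₁ * s₂ ν₂ * (M * |T₁ ν₁ - x₁| ^ γ₁ * |T₂ ν₂ - x₂| ^ γ₂)
        = (∑ ν₁ ∈ R₁, s₁ ν₁ * (M * |T₁ ν₁ - x₁| ^ γ₁))
            * (∑ ν₂ ∈ R₂, s₂ ν₂ * |T₂ ν₂ - x₂| ^ γ₂) := h
      _ = M * ((∑ ν₁ ∈ R₁, s₁ ν₁ * |T₁ ν₁ - x₁| ^ γ₁)
            * (∑ ν₂ ∈ R₂, s₂ ν₂ * |T₂ ν₂ - x₂| ^ γ₂)) := by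
          have h2 : ∑ ν₁ ∈ R₁, s₁ ν₁ * (M * |T₁ ν₁ - x₁| ^ γ₁)
              = M * ∑ ν₁ ∈ R₁, s₁ ν₁ * |T₁ ν₁ - x₁| ^ γ₁ := by
            rw [Finset.mul_sum]
            exact Finset.sum_congr rfl fun ν _ => by ring
          rw [h2, mul_assoc]
  -- Hoelder-type power step
  have rpow_step : ∀ (R : Finset ℕ) (s T : ℕ → ℝ) (y γ : ℝ), (∀ ν, 0 ≤ s ν) →
      (∑ ν ∈ R, s ν = 1) → 0 < γ → γ ≤ 1 →
      ∑ ν ∈ R, s ν * |T ν - y| ^ γ ≤ (∑ ν ∈ R, s ν * (T ν - y) ^ 2) ^ (γ / 2) := by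
    intro R s T y γ hs hsum hγ hγ'
    have hp2 : (1:ℝ) ≤ 2 / γ := by rw [le_div_iff₀ hγ]; linarith
    have h := Real.arith_mean_le_rpow_mean R s (fun ν => |T ν - y| ^ γ)
      (fun ν _ => hs ν) hsum (fun ν _ => Real.rpow_nonneg (abs_nonneg _) _) hp2
    have hz : ∀ ν : ℕ, (|T ν - y| ^ γ) ^ (2 / γ) = (T ν - y) ^ 2 := by
      intro ν
      rw [← Real.rpow_mul (abs_nonneg _), show γ * (2 / γ) = 2 by field_simp,
        show (2:ℝ) = ((2:ℕ):ℝ) by norm_num, Real.rpow_natCast, sq_abs]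
    simp only [hz] at h
    rwa [one_div_div] at h
  have hP1 := rpow_step R₁ s₁ T₁ x₁ γ₁ hs₁ hsum₁ hγ₁ hγ₁'
  have hP2 := rpow_step R₂ s₂ T₂ x₂ γ₂ hs₂ hsum₂ hγ₂ hγ₂'
  have hQ1 : (0:ℝ) ≤ ∑ ν ∈ R₁, s₁ ν * |T₁ ν - x₁| ^ γ₁ :=
    Finset.sum_nonneg fun ν _ => mul_nonneg (hs₁ ν) (Real.rpow_nonneg (abs_nonneg _) _)
  have hQ2 : (0:ℝ) ≤ ∑ ν ∈ R₂, s₂ ν * |T₂ ν - x₂| ^ γ₂ :=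
    Finset.sum_nonneg fun ν _ => mul_nonneg (hs₂ ν) (Real.rpow_nonneg (abs_nonneg _) _)
  have hA0 : (0:ℝ) ≤ ∑ ν ∈ R₁, s₁ ν * (T₁ ν - x₁) ^ 2 :=
    Finset.sum_nonneg fun ν _ => mul_nonneg (hs₁ ν) (sq_nonneg _)
  have hB0 : (0:ℝ) ≤ ∑ ν ∈ R₂, s₂ ν * (T₂ ν - x₂) ^ 2 :=
    Finset.sum_nonneg fun ν _ => mul_nonneg (hs₂ ν) (sq_nonneg _)
  rw [hA, hB, mul_assoc]
  refine habs.trans ?_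
  refine mul_le_mul_of_nonneg_left ?_ hM.le
  exact mul_le_mul hP1 hP2 hQ2 (Real.rpow_nonneg hA0 _)
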